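/- Let u ⊆ {1,…,s} be nonempty and k ∈ {0,1,…,m−1}^{|u|}. For every i ∈ {0,…,2^m−1}, Σ_{i′=0}^{2^m−1} ∏_{j∈u} N_{i,i′,j} = Σ_{i′=0}^{2^m−1} ∏_{j∈u} N_{0,i′,j}. -/

import Mathlib

open Finset

noncomputable section

/-- The bit vector `i⃗ ∈ F₂^m` of the integer `i = Σ_{ℓ=1}^m i_ℓ 2^{ℓ-1}`. -/
def bvec (m : ℕ) (i : ℕ) : Fin m → ZMod 2 :=
  fun ℓ => if Nat.testBit i ℓ.1 then 1 else 0

/-- The `(r+1)`-st row (i.e. `r` with 0-indexing) of an `m × m` matrix over `F₂`,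
as a vector in `F₂^m`; junk value `0` if `r ≥ m` (never used under the hypotheses below). -/
def rowAt (m : ℕ) (A : Matrix (Fin m) (Fin m) (ZMod 2)) (r : ℕ) : Fin m → ZMod 2 :=
  fun ℓ => if h : r < m then A ⟨r, h⟩ ℓ else 0

/-- The stacked matrix `C_{u,k}`: for each `j ∈ u`, the first `k j` rows of `C j`. -/
def stack {m s : ℕ} (C : Fin s → Matrix (Fin m) (Fin m) (ZMod 2))
    (u : Finset (Fin s)) (k : Fin s → ℕ) :
    Matrix ((j : {x // x ∈ u}) × Fin (k j.1)) (Fin m) (ZMod 2) :=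
  fun p => rowAt m (C p.1.1) p.2.1

/-- `∇C_{u,k}`: the matrix whose rows are the `(k j + 1)`-st rows (1-indexed) of `C j`, `j ∈ u`. -/
def grad {m s : ℕ} (C : Fin s → Matrix (Fin m) (Fin m) (ZMod 2))
    (u : Finset (Fin s)) (k : Fin s → ℕ) :
    Matrix {x // x ∈ u} (Fin m) (ZMod 2) :=
  fun j => rowAt m (C j.1) (k j.1)

/-- The coordinate `x_{ij} ∈ [0,1)` of the digital net generated by `C₁,…,C_s`:
`x_{ij} = Σ_{ℓ=1}^m y_ℓ 2^{-ℓ}` where `y = C_j · i⃗` over `F₂`. -/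
def pt {m s : ℕ} (C : Fin s → Matrix (Fin m) (Fin m) (ZMod 2)) (i : ℕ) (j : Fin s) : ℝ :=
  ∑ ℓ : Fin m, (((C j).mulVec (bvec m i) ℓ).val : ℝ) / 2 ^ (ℓ.1 + 1)

/-- The factor `N`: with `M(x,x') = max{k ∈ ℕ₀ : ⌊2^k x⌋ = ⌊2^k x'⌋}` (the number of matching
leading binary digits), `Nf x x' c` equals `1` if `M(x,x') > c` (equivalently the first `c+1`
binary digits match), `-1` if `M(x,x') = c` (the first `c` digits match but not `c+1`), and
`0` if `M(x,x') < c`. -/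
def Nf (x x' : ℝ) (c : ℕ) : ℤ :=
  if ⌊(2:ℝ) ^ (c + 1) * x⌋ = ⌊(2:ℝ) ^ (c + 1) * x'⌋ then 1
  else if ⌊(2:ℝ) ^ c * x⌋ = ⌊(2:ℝ) ^ c * x'⌋ then -1
  else 0

/-- The gain coefficient `Γ_{u,k} = 2^{-m} Σ_{i=0}^{2^m-1} Σ_{i'=0}^{2^m-1} ∏_{j∈u} N_{i,i',j}`. -/
def Gam {m s : ℕ} (C : Fin s → Matrix (Fin m) (Fin m) (ZMod 2))
    (u : Finset (Fin s)) (k : Fin s → ℕ) : ℚ :=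
  (2 ^ m : ℚ)⁻¹ * ∑ i ∈ Finset.range (2 ^ m), ∑ i' ∈ Finset.range (2 ^ m),
      ∏ j ∈ u, (Nf (pt C i j) (pt C i' j) (k j) : ℚ)

/-!
For a fixed `j`, the coordinate `x_{ij}` is the dyadic number whose binary digits are
`C_j i⃗`, and `⌊2^c x_{ij}⌋` determines exactly the first `c` of these digits. Hence
`N_{i,i',j}` depends only on the digit difference `C_j i⃗ + C_j i⃗'`, which by linearity is
`C_j (i ⊕ i')⃗`, with `⊕` the bitwise xor. So `N_{i,i',j} = N_{0,i ⊕ i',j}` for every `j`, and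
`i' ↦ i ⊕ i'` permutes `{0, …, 2^m - 1}`.
-/

section PrefixValue

/-- The integer with binary expansion `d 0, d 1, …, d (c-1)`, most significant digit first. -/
def prefixValue (c : ℕ) (d : ℕ → ℕ) : ℕ := ∑ ℓ ∈ range c, d ℓ * 2 ^ (c - 1 - ℓ)

theorem prefixValue_succ (c : ℕ) (d : ℕ → ℕ) :
    prefixValue (c + 1) d = 2 * prefixValue c d + d c := by
  rw [prefixValue, prefixValue, sum_range_succ, Nat.add_sub_cancel, Nat.sub_self, pow_zero,
    mul_one, mul_sum]
  congr 1
  refine sum_congr rfl fun ℓ hℓ => ?_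
  rw [show c - ℓ = c - 1 - ℓ + 1 by have := mem_range.mp hℓ; omega, pow_succ]
  ring

theorem eq_of_prefixValue_eq {d d' : ℕ → ℕ} (hd : ∀ ℓ, d ℓ ≤ 1) (hd' : ∀ ℓ, d' ℓ ≤ 1) :
    ∀ {c}, prefixValue c d = prefixValue c d' → ∀ ℓ < c, d ℓ = d' ℓ
  | 0, _, ℓ, hℓ => absurd hℓ (Nat.not_lt_zero ℓ)
  | c + 1, h, ℓ, hℓ => by
    rw [prefixValue_succ, prefixValue_succ] at h
    have hc : prefixValue c d = prefixValue c d' ∧ d c = d' c := by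
      have := hd c; have := hd' c; omega
    rcases Nat.lt_succ_iff_lt_or_eq.mp hℓ with hℓ | rfl
    · exact eq_of_prefixValue_eq hd hd' hc.1 ℓ hℓ
    · exact hc.2

theorem two_pow_mul_sum_range_div_two_pow (c : ℕ) (d : ℕ → ℕ) :
    (2 : ℝ) ^ c * ∑ ℓ ∈ range c, (d ℓ : ℝ) / 2 ^ (ℓ + 1) = prefixValue c d := by
  rw [prefixValue, mul_sum]
  push_cast
  refine sum_congr rfl fun ℓ hℓ => ?_
  have hc : (2 : ℝ) ^ c = 2 ^ (c - 1 - ℓ) * 2 ^ (ℓ + 1) := by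
    rw [← pow_add]
    congr 1
    have := mem_range.mp hℓ
    omega
  rw [hc]
  field_simp

theorem sum_range_digits_div_two_pow_le {d : ℕ → ℕ} (hd : ∀ ℓ, d ℓ ≤ 1) (t : ℕ) :
    ∑ ℓ ∈ range t, (d ℓ : ℝ) / 2 ^ (ℓ + 1) ≤ 1 - 1 / 2 ^ t := by
  induction t with
  | zero => simp
  | succ t ih =>
    have hdt : (d t : ℝ) ≤ 1 := by exact_mod_cast hd t
    have hlast : (d t : ℝ) / 2 ^ (t + 1) ≤ 1 / 2 ^ (t + 1) := by gcongr
    calc ∑ ℓ ∈ range (t + 1), (d ℓ : ℝ) / 2 ^ (ℓ + 1)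
        ≤ 1 - 1 / 2 ^ t + 1 / 2 ^ (t + 1) := by rw [sum_range_succ]; exact add_le_add ih hlast
      _ = 1 - 1 / 2 ^ (t + 1) := by rw [pow_succ]; ring

/-- Multiplying by `2^c` shifts the binary point `c` places; the remaining digits sum to less
than `1`. -/
theorem floor_two_pow_mul_sum_digits {d : ℕ → ℕ} (hd : ∀ ℓ, d ℓ ≤ 1) (c t : ℕ) :
    ⌊(2 : ℝ) ^ c * ∑ ℓ ∈ range (c + t), (d ℓ : ℝ) / 2 ^ (ℓ + 1)⌋ = prefixValue c d := by
  have htail : (2 : ℝ) ^ c * ∑ ℓ ∈ range t, (d (c + ℓ) : ℝ) / 2 ^ (c + ℓ + 1)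
      = ∑ ℓ ∈ range t, (d (c + ℓ) : ℝ) / 2 ^ (ℓ + 1) := by
    rw [mul_sum]
    refine sum_congr rfl fun ℓ _ => ?_
    rw [add_assoc, pow_add]
    field_simp
  rw [sum_range_add, mul_add, two_pow_mul_sum_range_div_two_pow, htail, Int.floor_natCast_add,
    add_eq_left, Int.floor_eq_zero_iff]
  refine ⟨sum_nonneg fun ℓ _ => by positivity, ?_⟩
  calc ∑ ℓ ∈ range t, (d (c + ℓ) : ℝ) / 2 ^ (ℓ + 1)
      ≤ 1 - 1 / 2 ^ t := sum_range_digits_div_two_pow_le (fun ℓ => hd (c + ℓ)) t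
    _ < 1 := by simp

end PrefixValue

section DyadicPoint

variable {m : ℕ}

/-- `pt C i j = dyadicPoint ((C j).mulVec (bvec m i))` holds by `rfl`. -/
def dyadicPoint (y : Fin m → ZMod 2) : ℝ := ∑ ℓ : Fin m, ((y ℓ).val : ℝ) / 2 ^ (ℓ.1 + 1)

def digitSeq (y : Fin m → ZMod 2) (ℓ : ℕ) : ℕ := if h : ℓ < m then (y ⟨ℓ, h⟩).val else 0

theorem digitSeq_le_one (y : Fin m → ZMod 2) (ℓ : ℕ) : digitSeq y ℓ ≤ 1 := by
  unfold digitSeq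
  split
  · exact Nat.le_of_lt_succ (ZMod.val_lt _)
  · exact zero_le_one

theorem dyadicPoint_eq_sum_range (y : Fin m → ZMod 2) (c : ℕ) :
    dyadicPoint y = ∑ ℓ ∈ range (c + m), (digitSeq y ℓ : ℝ) / 2 ^ (ℓ + 1) := by
  rw [add_comm, sum_range_add, ← Fin.sum_univ_eq_sum_range]
  simp [dyadicPoint, digitSeq]

theorem floor_two_pow_mul_dyadicPoint_eq_iff (c : ℕ) (y y' : Fin m → ZMod 2) :
    ⌊(2 : ℝ) ^ c * dyadicPoint y⌋ = ⌊(2 : ℝ) ^ c * dyadicPoint y'⌋ ↔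
      ∀ ℓ : Fin m, ℓ.1 < c → y ℓ = y' ℓ := by
  rw [dyadicPoint_eq_sum_range y c, dyadicPoint_eq_sum_range y' c,
    floor_two_pow_mul_sum_digits (digitSeq_le_one y),
    floor_two_pow_mul_sum_digits (digitSeq_le_one y'), Nat.cast_inj]
  constructor
  · intro h ℓ hℓ
    have := eq_of_prefixValue_eq (digitSeq_le_one y) (digitSeq_le_one y') h ℓ hℓ
    simpa [digitSeq, ZMod.val_injective 2 |>.eq_iff] using this
  · intro h
    refine sum_congr rfl fun ℓ hℓ => ?_
    by_cases hℓm : ℓ < m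
    · simp [digitSeq, hℓm, h ⟨ℓ, hℓm⟩ (mem_range.mp hℓ)]
    · simp [digitSeq, hℓm]

theorem Nf_dyadicPoint_add_right (y y' z : Fin m → ZMod 2) (c : ℕ) :
    Nf (dyadicPoint (y + z)) (dyadicPoint (y' + z)) c =
      Nf (dyadicPoint y) (dyadicPoint y') c := by
  simp only [Nf, floor_two_pow_mul_dyadicPoint_eq_iff, Pi.add_apply, add_left_inj]

end DyadicPoint

theorem bvec_zero (m : ℕ) : bvec m 0 = 0 := by
  funext ℓ
  simp [bvec]

theorem bvec_xor (m i i' : ℕ) : bvec m (i ^^^ i') = bvec m i + bvec m i' := by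
  funext ℓ
  simp only [bvec, Nat.testBit_xor, Pi.add_apply]
  cases Nat.testBit i ℓ <;> cases Nat.testBit i' ℓ <;> decide

theorem Nf_pt_xor {m s : ℕ} (C : Fin s → Matrix (Fin m) (Fin m) (ZMod 2)) (i i' : ℕ)
    (j : Fin s) (c : ℕ) :
    Nf (pt C i j) (pt C (i ^^^ i') j) c = Nf (pt C 0 j) (pt C i' j) c := by
  have h := Nf_dyadicPoint_add_right 0 ((C j).mulVec (bvec m i')) ((C j).mulVec (bvec m i)) c
  rwa [zero_add, add_comm, ← Matrix.mulVec_add, ← bvec_xor, ← Matrix.mulVec_zero (C j),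
    ← bvec_zero m] at h

theorem sum_range_two_pow_xor {M : Type*} [AddCommMonoid M] {m i : ℕ} (hi : i < 2 ^ m)
    (f : ℕ → M) : ∑ i' ∈ range (2 ^ m), f (i ^^^ i') = ∑ i' ∈ range (2 ^ m), f i' :=
  sum_nbij' (i ^^^ ·) (i ^^^ ·)
    (fun _ ha => mem_range.mpr (Nat.xor_lt_two_pow hi (mem_range.mp ha)))
    (fun _ ha => mem_range.mpr (Nat.xor_lt_two_pow hi (mem_range.mp ha)))
    (fun a _ => Nat.xor_xor_cancel_left i a) (fun a _ => Nat.xor_xor_cancel_left i a)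
    (fun _ _ => rfl)

theorem statement_general (m s : ℕ)
    (C : Fin s → Matrix (Fin m) (Fin m) (ZMod 2))
    (u : Finset (Fin s))
    (k : Fin s → ℕ)
    (i : ℕ) (hi : i < 2 ^ m) :
    ∑ i' ∈ Finset.range (2 ^ m), ∏ j ∈ u, Nf (pt C i j) (pt C i' j) (k j) =
      ∑ i' ∈ Finset.range (2 ^ m), ∏ j ∈ u, Nf (pt C 0 j) (pt C i' j) (k j) := by
  rw [← sum_range_two_pow_xor hi]
  simp only [Nf_pt_xor]

theorem statement (m s : ℕ) (hm : 1 ≤ m) (hs : 1 ≤ s)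
    (C : Fin s → Matrix (Fin m) (Fin m) (ZMod 2))
    (u : Finset (Fin s)) (hu : u.Nonempty)
    (k : Fin s → ℕ) (hk : ∀ j ∈ u, k j ≤ m - 1)
    (i : ℕ) (hi : i < 2 ^ m) :
    ∑ i' ∈ Finset.range (2 ^ m), ∏ j ∈ u, Nf (pt C i j) (pt C i' j) (k j) =
      ∑ i' ∈ Finset.range (2 ^ m), ∏ j ∈ u, Nf (pt C 0 j) (pt C i' j) (k j) :=
  statement_general m s C u k i hi

end
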